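/- Let F_{T₁} := {f ∈ P : the coefficients of x⁴ and of x²z² in f are zero}. Then the linear span of F_{T₁} equals the 9-dimensional subspace of H₄ consisting of all forms whose coefficients of x⁴, x³y, x³z, x²z², x²yz and xz³ vanish, i.e. the span of the monomials x²y², xy³, xy²z, xyz², y⁴, y³z, y²z², yz³, z⁴. -/

import Mathlib

open MvPolynomial

noncomputable section

/-- The space of ternary (3-variable) real polynomials. `H d` corresponds to the
homogeneous polynomials of degree `d` via the predicate `IsHomogeneous`. -/
abbrev MvP : Type := MvPolynomial (Fin 3) ℝ

/-- The cone `P` of nonnegative ternary quartics. -/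
def Pcone : Set MvP :=
  {f | f.IsHomogeneous 4 ∧ ∀ a : Fin 3 → ℝ, 0 ≤ eval a f}

/-- `F` is a face of the cone `P`. -/
def IsFace (F : Set MvP) : Prop :=
  F ⊆ Pcone ∧
  (∀ a ∈ F, ∀ b ∈ F, a + b ∈ F) ∧
  (∀ c : ℝ, 0 ≤ c → ∀ a ∈ F, c • a ∈ F) ∧
  (∀ a ∈ Pcone, ∀ b ∈ Pcone, a + b ∈ F → a ∈ F ∧ b ∈ F)

/-- `J_F = {q ∈ H₂ : q² ∈ F}`. -/
def Jset (F : Set MvP) : Set MvP :=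
  {q | q.IsHomogeneous 2 ∧ q ^ 2 ∈ F}

/-- The face `F_{T₁}`: quartics in `P` whose coefficients of `x⁴` and `x²z²` vanish. -/
def FT1 : Set MvP :=
  {f ∈ Pcone | coeff (Finsupp.single (0 : Fin 3) 4) f = 0 ∧
    coeff (Finsupp.single (0 : Fin 3) 2 + Finsupp.single (2 : Fin 3) 2) f = 0}

/-!
For a quadratic form `q = y ℓ + a z²` (`ℓ` linear), the quartic `q²` is nonnegative and has no
`x⁴` or `x²z²` term, so it lies in `F_{T₁}`. Polarizing, `span F_{T₁}` contains every product of
two of `xy, y², yz, z²`, i.e. every monomial `xⁱyʲzᵏ` of degree 4 with `i ≤ j`.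

Conversely let `f ∈ F_{T₁}` and write `c_{ijk}` for its coefficients. Then
`f(t, 0, 1) = c₃₀₁t³ + c₁₀₃t + c₀₀₄ ≥ 0` forces `c₃₀₁ = c₁₀₃ = 0`, after which
`f(t, 1, u)` is a cubic in `t` with leading coefficient `c₃₁₀` and, once that vanishes, a
quadratic with leading coefficient `c₂₂₀ + c₂₁₁u`; nonnegativity kills `c₃₁₀` and `c₂₁₁`.
So every monomial of `f` has `i ≤ j`.
-/

open Finset

def xyzExp (i j k : ℕ) : Fin 3 →₀ ℕ :=
  Finsupp.single 0 i + Finsupp.single 1 j + Finsupp.single 2 k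

@[simp] lemma xyzExp_apply_zero (i j k : ℕ) : xyzExp i j k 0 = i := by simp [xyzExp]

@[simp] lemma xyzExp_apply_one (i j k : ℕ) : xyzExp i j k 1 = j := by simp [xyzExp]

@[simp] lemma xyzExp_apply_two (i j k : ℕ) : xyzExp i j k 2 = k := by simp [xyzExp]

lemma xyzExp_eta (d : Fin 3 →₀ ℕ) : xyzExp (d 0) (d 1) (d 2) = d := by
  ext i; fin_cases i <;> simp

lemma xyzExp_inj {i j k i' j' k' : ℕ} :
    xyzExp i j k = xyzExp i' j' k' ↔ i = i' ∧ j = j' ∧ k = k' := by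
  refine ⟨fun h => ?_, by rintro ⟨rfl, rfl, rfl⟩; rfl⟩
  simpa using And.intro (DFunLike.congr_fun h 0)
    (And.intro (DFunLike.congr_fun h 1) (DFunLike.congr_fun h 2))

lemma degree_eq_add_fin_three (d : Fin 3 →₀ ℕ) : d.degree = d 0 + d 1 + d 2 := by
  rw [Finsupp.degree_eq_sum, Fin.sum_univ_three]

lemma monomial_xyzExp (i j k : ℕ) :
    (monomial (xyzExp i j k) (1 : ℝ) : MvP) = X 0 ^ i * X 1 ^ j * X 2 ^ k := by
  rw [xyzExp, monomial_add_single, monomial_add_single, ← X_pow_eq_monomial]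

lemma eval_eq_sum_of_isHomogeneous {R : Type*} [CommSemiring R] {f : MvPolynomial (Fin 3) R}
    {n : ℕ} (hf : f.IsHomogeneous n) (v : Fin 3 → R) :
    eval v f = ∑ i ∈ range (n + 1), ∑ j ∈ range (n + 1 - i),
      coeff (xyzExp i j (n - i - j)) f * v 0 ^ i * v 1 ^ j * v 2 ^ (n - i - j) := by
  have hdeg : ∀ d ∈ f.support, d 0 + d 1 + d 2 = n := fun d hd => by
    rw [← degree_eq_add_fin_three, Finsupp.degree_eq_weight_one]
    exact hf (mem_support_iff.mp hd)
  rw [eval_eq', sum_sigma']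
  refine sum_of_injOn (fun d => ⟨d 0, d 1⟩) ?_ ?_ ?_ ?_
  · intro d hd d' hd' h
    simp only [Sigma.mk.injEq, heq_eq_eq] at h
    have := hdeg d hd
    have := hdeg d' hd'
    rw [← xyzExp_eta d, ← xyzExp_eta d', h.1, h.2]
    congr 1
    omega
  · intro d hd
    have := hdeg d hd
    simp only [coe_sigma, Set.mem_sigma_iff, coe_range, Set.mem_Iio]
    omega
  · rintro ⟨i, j⟩ - hne
    by_contra h
    rw [mul_assoc, mul_assoc] at h
    exact hne ⟨_, mem_support_iff.mpr (left_ne_zero_of_mul h), by simp⟩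
  · intro d hd
    have := hdeg d hd
    conv_lhs => rw [← xyzExp_eta d]
    simp only [Fin.prod_univ_three, xyzExp_apply_zero, xyzExp_apply_one, xyzExp_apply_two]
    rw [show d 2 = n - d 0 - d 1 by omega]
    ring

lemma eq_zero_of_forall_linear_nonneg {a b : ℝ} (h : ∀ t : ℝ, 0 ≤ a * t + b) : a = 0 := by
  by_contra ha
  have := h ((-b - 1) / a)
  rw [mul_div_cancel₀ _ ha] at this
  linarith

lemma nonneg_of_forall_quadratic_nonneg {a b c : ℝ} (h : ∀ t : ℝ, 0 ≤ a * t ^ 2 + b * t + c) :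
    0 ≤ a := by
  by_contra! ha
  set T := (|b| + |c|) / -a + 1 with hT_def
  have hT : -a * T = |b| + |c| - a := by
    rw [hT_def, mul_add, mul_div_cancel₀ _ (neg_ne_zero.mpr ha.ne)]; ring
  have hT1 : 1 ≤ T := le_add_of_nonneg_left (div_nonneg (by positivity) (by linarith))
  nlinarith [h T, le_abs_self b, neg_abs_le b, abs_nonneg c, le_abs_self c, neg_abs_le c]

lemma nonneg_of_forall_cubic_nonneg {a b c d : ℝ}
    (h : ∀ t : ℝ, 0 ≤ a * t ^ 3 + b * t ^ 2 + c * t + d) : 0 ≤ a := by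
  by_contra! ha
  -- At this `T ≥ 1` the value is at most `T² (a T + |b| + |c| + |d|) = a T² < 0`.
  set T := (|b| + |c| + |d|) / -a + 1 with hT_def
  have hT : -a * T = |b| + |c| + |d| - a := by
    rw [hT_def, mul_add, mul_div_cancel₀ _ (neg_ne_zero.mpr ha.ne)]; ring
  have hT1 : 1 ≤ T := le_add_of_nonneg_left (div_nonneg (by positivity) (by linarith))
  nlinarith [h T, le_abs_self b, neg_abs_le b, le_abs_self c, neg_abs_le c, le_abs_self d,
    neg_abs_le d, abs_nonneg b, abs_nonneg c, abs_nonneg d, sq_nonneg T]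

lemma eq_zero_of_forall_cubic_nonneg {a b c d : ℝ}
    (h : ∀ t : ℝ, 0 ≤ a * t ^ 3 + b * t ^ 2 + c * t + d) : a = 0 := by
  have h_neg : ∀ t : ℝ, 0 ≤ -a * t ^ 3 + b * t ^ 2 + -c * t + d := fun t => by
    have := h (-t)
    ring_nf at this ⊢
    linarith
  linarith [nonneg_of_forall_cubic_nonneg h, nonneg_of_forall_cubic_nonneg h_neg]

lemma coeff_eq_zero_of_forall_eval_nonneg {f : MvP} (hf : f.IsHomogeneous 4)
    (hpos : ∀ v, 0 ≤ eval v f) (h400 : coeff (xyzExp 4 0 0) f = 0)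
    (h202 : coeff (xyzExp 2 0 2) f = 0) :
    coeff (xyzExp 3 1 0) f = 0 ∧ coeff (xyzExp 3 0 1) f = 0 ∧ coeff (xyzExp 2 1 1) f = 0 ∧
      coeff (xyzExp 1 0 3) f = 0 := by
  have eval_t01 (t : ℝ) : eval ![t, 0, 1] f = coeff (xyzExp 3 0 1) f * t ^ 3
      + coeff (xyzExp 1 0 3) f * t + coeff (xyzExp 0 0 4) f := by
    rw [eval_eq_sum_of_isHomogeneous hf]
    simp only [sum_range_succ, range_zero, sum_empty, Nat.reduceAdd, Nat.reduceSub,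
      Matrix.cons_val_zero, Matrix.cons_val_one, Matrix.cons_val_two, Matrix.tail_cons,
      Matrix.head_cons, h400, h202]
    ring
  have h301 : coeff (xyzExp 3 0 1) f = 0 :=
    eq_zero_of_forall_cubic_nonneg (b := 0) fun t => by simpa [eval_t01] using hpos ![t, 0, 1]
  have h103 : coeff (xyzExp 1 0 3) f = 0 :=
    eq_zero_of_forall_linear_nonneg fun t => by simpa [eval_t01, h301] using hpos ![t, 0, 1]
  have eval_t1u (t u : ℝ) : eval ![t, 1, u] f
      = (coeff (xyzExp 3 1 0) f + coeff (xyzExp 3 0 1) f * u) * t ^ 3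
      + (coeff (xyzExp 2 1 1) f * u + coeff (xyzExp 2 2 0) f) * t ^ 2
      + (coeff (xyzExp 1 3 0) f + coeff (xyzExp 1 2 1) f * u + coeff (xyzExp 1 1 2) f * u ^ 2) * t
      + (coeff (xyzExp 0 4 0) f + coeff (xyzExp 0 3 1) f * u + coeff (xyzExp 0 2 2) f * u ^ 2
        + coeff (xyzExp 0 1 3) f * u ^ 3 + coeff (xyzExp 0 0 4) f * u ^ 4) := by
    rw [eval_eq_sum_of_isHomogeneous hf]
    simp only [sum_range_succ, range_zero, sum_empty, Nat.reduceAdd, Nat.reduceSub,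
      Matrix.cons_val_zero, Matrix.cons_val_one, Matrix.cons_val_two, Matrix.tail_cons,
      Matrix.head_cons, h400, h202, h103]
    ring
  have h310 : coeff (xyzExp 3 1 0) f = 0 :=
    eq_zero_of_forall_cubic_nonneg fun t => by simpa [eval_t1u] using hpos ![t, 1, 0]
  have h211 : coeff (xyzExp 2 1 1) f = 0 :=
    eq_zero_of_forall_linear_nonneg fun u => nonneg_of_forall_quadratic_nonneg fun t => by
      simpa [eval_t1u, h310, h301] using hpos ![t, 1, u]
  exact ⟨h310, h301, h211, h103⟩

def quarticExpsXLeY : Set (Fin 3 →₀ ℕ) := {d | d.degree = 4 ∧ d 0 ≤ d 1}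

lemma mem_restrictSupport_quarticExpsXLeY_iff {f : MvP} :
    f ∈ restrictSupport ℝ quarticExpsXLeY ↔
      f.IsHomogeneous 4 ∧ ∀ d : Fin 3 →₀ ℕ, d 1 < d 0 → coeff d f = 0 := by
  rw [← mem_homogeneousSubmodule, homogeneousSubmodule_eq_finsupp_supported]
  refine Set.subset_inter_iff.trans (and_congr Iff.rfl ⟨fun h d hlt => ?_, fun h d hd => ?_⟩)
  · by_contra hd
    exact absurd (h (mem_support_iff.mpr hd)) (not_le.mpr hlt)
  · exact not_lt.mp fun hlt => mem_support_iff.mp hd (h d hlt)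

lemma forall_coeff_eq_zero_iff {f : MvP} (hf : f.IsHomogeneous 4) :
    (∀ d : Fin 3 →₀ ℕ, d 1 < d 0 → coeff d f = 0) ↔
      coeff (xyzExp 4 0 0) f = 0 ∧ coeff (xyzExp 3 1 0) f = 0 ∧ coeff (xyzExp 3 0 1) f = 0 ∧
      coeff (xyzExp 2 0 2) f = 0 ∧ coeff (xyzExp 2 1 1) f = 0 ∧ coeff (xyzExp 1 0 3) f = 0 := by
  refine ⟨fun h => ⟨h _ (by simp), h _ (by simp), h _ (by simp), h _ (by simp), h _ (by simp),
    h _ (by simp)⟩, fun h d hlt => ?_⟩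
  by_cases hdeg : d.degree = 4
  · rw [degree_eq_add_fin_three] at hdeg
    rw [← xyzExp_eta d]
    obtain ⟨h0, h1, h2⟩ | ⟨h0, h1, h2⟩ | ⟨h0, h1, h2⟩ | ⟨h0, h1, h2⟩ | ⟨h0, h1, h2⟩ | ⟨h0, h1, h2⟩ :
        d 0 = 4 ∧ d 1 = 0 ∧ d 2 = 0 ∨ d 0 = 3 ∧ d 1 = 1 ∧ d 2 = 0 ∨ d 0 = 3 ∧ d 1 = 0 ∧ d 2 = 1 ∨
        d 0 = 2 ∧ d 1 = 0 ∧ d 2 = 2 ∨ d 0 = 2 ∧ d 1 = 1 ∧ d 2 = 1 ∨ d 0 = 1 ∧ d 1 = 0 ∧ d 2 = 3 := by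
      omega
    all_goals simp only [h0, h1, h2, h]
  · exact hf.coeff_eq_zero hdeg

lemma quarticExpsXLeY_eq : quarticExpsXLeY = (fun p : ℕ × ℕ × ℕ => xyzExp p.1 p.2.1 p.2.2) ''
    {(2, 2, 0), (1, 3, 0), (1, 2, 1), (1, 1, 2), (0, 4, 0), (0, 3, 1), (0, 2, 2), (0, 1, 3),
      (0, 0, 4)} := by
  ext d
  simp only [quarticExpsXLeY, Set.mem_image, Set.mem_insert_iff, Set.mem_singleton_iff,
    degree_eq_add_fin_three]
  constructor
  · rintro ⟨hdeg, hle⟩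
    refine ⟨(d 0, d 1, d 2), ?_, xyzExp_eta d⟩
    have : d 0 ≤ 2 := by omega
    have : d 1 ≤ 4 := by omega
    rw [show d 2 = 4 - d 0 - d 1 by omega]
    interval_cases d 0 <;> interval_cases d 1 <;> first | omega | simp
  · rintro ⟨p, hp, rfl⟩
    rcases hp with rfl | rfl | rfl | rfl | rfl | rfl | rfl | rfl | rfl <;> simp

lemma card_quarticExpsXLeY : Nat.card quarticExpsXLeY = 9 := by
  rw [quarticExpsXLeY_eq, Nat.card_image_of_injective]
  · rw [Nat.card_eq_fintype_card, Fintype.card_ofFinset]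
    rfl
  · rintro ⟨i, j, k⟩ ⟨i', j', k'⟩ h
    obtain ⟨rfl, rfl, rfl⟩ := xyzExp_inj.mp h
    rfl

lemma image_monomial_quarticExpsXLeY :
    (monomial · 1) '' quarticExpsXLeY =
      ({X 0 ^ 2 * X 1 ^ 2, X 0 * X 1 ^ 3, X 0 * X 1 ^ 2 * X 2, X 0 * X 1 * X 2 ^ 2,
        X 1 ^ 4, X 1 ^ 3 * X 2, X 1 ^ 2 * X 2 ^ 2, X 1 * X 2 ^ 3, X 2 ^ 4} : Set MvP) := by
  rw [quarticExpsXLeY_eq, Set.image_image]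
  simp only [Set.image_insert_eq, Set.image_singleton, monomial_xyzExp, pow_zero, mul_one,
    one_mul, pow_one]

lemma coeff_sq_eq_zero_of_apply_one_eq_zero (g : MvP) (a : ℝ) {m : Fin 3 →₀ ℕ} (hm1 : m 1 = 0)
    (hm2 : m ≠ Finsupp.single 2 4) : coeff m ((X 1 * g + C a * X 2 ^ 2) ^ 2) = 0 := by
  have : (X 1 * g + C a * X 2 ^ 2) ^ 2
      = X 1 * (g * (X 1 * g + C (2 * a) * X 2 ^ 2)) + C (a ^ 2) * X 2 ^ 4 := by
    simp only [map_mul, map_pow, map_ofNat]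
    ring
  rw [this, coeff_add, coeff_X_mul', coeff_C_mul, coeff_X_pow]
  simp [hm1, Ne.symm hm2]

lemma sq_mem_FT1 {g : MvP} (hg : g.IsHomogeneous 1) (a : ℝ) :
    (X 1 * g + C a * X 2 ^ 2) ^ 2 ∈ FT1 := by
  have hq : (X 1 * g + C a * X 2 ^ 2).IsHomogeneous 2 :=
    ((isHomogeneous_X ℝ 1).mul hg).add ((isHomogeneous_C _ a).mul ((isHomogeneous_X ℝ 2).pow 2))
  refine ⟨⟨hq.pow 2, fun v => ?_⟩, ?_, ?_⟩
  · rw [map_pow]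
    exact sq_nonneg _
  all_goals
    refine coeff_sq_eq_zero_of_apply_one_eq_zero g a (by simp) fun h => ?_
    simpa using DFunLike.congr_fun h 0

lemma mul_mem_of_sq_mem {K A : Type*} [Field K] [CharZero K] [CommRing A] [Module K A]
    {S : Submodule K A} {p q : A} (hp : p ^ 2 ∈ S) (hq : q ^ 2 ∈ S) (hpq : (p + q) ^ 2 ∈ S) :
    p * q ∈ S := by
  have h2 : (2 : K) • (p * q) ∈ S := by
    rw [two_smul]
    convert S.sub_mem (S.sub_mem hpq hp) hq using 1
    ring
  exact (S.smul_mem_iff two_ne_zero).mp h2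

lemma mul_mem_span_FT1 {g g' : MvP} (hg : g.IsHomogeneous 1) (hg' : g'.IsHomogeneous 1)
    (a a' : ℝ) :
    (X 1 * g + C a * X 2 ^ 2) * (X 1 * g' + C a' * X 2 ^ 2) ∈ Submodule.span ℝ FT1 := by
  refine mul_mem_of_sq_mem (Submodule.subset_span (sq_mem_FT1 hg a))
    (Submodule.subset_span (sq_mem_FT1 hg' a')) ?_
  have h : _ ∈ Submodule.span ℝ FT1 := Submodule.subset_span (sq_mem_FT1 (hg.add hg') (a + a'))
  rw [map_add] at h
  convert h using 2
  ring

lemma restrictSupport_quarticExpsXLeY_le_span_FT1 :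
    restrictSupport ℝ quarticExpsXLeY ≤ Submodule.span ℝ FT1 := by
  rw [restrictSupport_eq_span, Submodule.span_le, image_monomial_quarticExpsXLeY]
  have hx := isHomogeneous_X ℝ (0 : Fin 3)
  have hy := isHomogeneous_X ℝ (1 : Fin 3)
  have hz := isHomogeneous_X ℝ (2 : Fin 3)
  have h0 := isHomogeneous_zero (Fin 3) ℝ 1
  intro m hm
  rw [SetLike.mem_coe]
  rcases hm with rfl | rfl | rfl | rfl | rfl | rfl | rfl | rfl | rfl
  · convert mul_mem_span_FT1 hx hx 0 0 using 1; rw [C_0]; ring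
  · convert mul_mem_span_FT1 hx hy 0 0 using 1; rw [C_0]; ring
  · convert mul_mem_span_FT1 hx hz 0 0 using 1; rw [C_0]; ring
  · convert mul_mem_span_FT1 hx h0 0 1 using 1; rw [C_0, C_1]; ring
  · convert mul_mem_span_FT1 hy hy 0 0 using 1; rw [C_0]; ring
  · convert mul_mem_span_FT1 hy hz 0 0 using 1; rw [C_0]; ring
  · convert mul_mem_span_FT1 hz hz 0 0 using 1; rw [C_0]; ring
  · convert mul_mem_span_FT1 hz h0 0 1 using 1; rw [C_0, C_1]; ring
  · convert mul_mem_span_FT1 h0 h0 1 1 using 1; rw [C_1]; ring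

lemma FT1_subset_restrictSupport_quarticExpsXLeY :
    FT1 ⊆ restrictSupport ℝ quarticExpsXLeY := by
  rintro f ⟨⟨hf, hpos⟩, h400, h202⟩
  have h400 : coeff (xyzExp 4 0 0) f = 0 := by simpa [xyzExp] using h400
  have h202 : coeff (xyzExp 2 0 2) f = 0 := by simpa [xyzExp] using h202
  obtain ⟨h310, h301, h211, h103⟩ := coeff_eq_zero_of_forall_eval_nonneg hf hpos h400 h202
  exact mem_restrictSupport_quarticExpsXLeY_iff.mpr
    ⟨hf, (forall_coeff_eq_zero_iff hf).mpr ⟨h400, h310, h301, h202, h211, h103⟩⟩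

theorem stmt_13 :
    (Submodule.span ℝ FT1 : Set MvP) =
      {f : MvP | f.IsHomogeneous 4 ∧
        coeff (Finsupp.single (0 : Fin 3) 4) f = 0 ∧
        coeff (Finsupp.single (0 : Fin 3) 3 + Finsupp.single (1 : Fin 3) 1) f = 0 ∧
        coeff (Finsupp.single (0 : Fin 3) 3 + Finsupp.single (2 : Fin 3) 1) f = 0 ∧
        coeff (Finsupp.single (0 : Fin 3) 2 + Finsupp.single (2 : Fin 3) 2) f = 0 ∧
        coeff (Finsupp.single (0 : Fin 3) 2 + Finsupp.single (1 : Fin 3) 1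
          + Finsupp.single (2 : Fin 3) 1) f = 0 ∧
        coeff (Finsupp.single (0 : Fin 3) 1 + Finsupp.single (2 : Fin 3) 3) f = 0} ∧
    Submodule.span ℝ FT1 = Submodule.span ℝ
      ({X 0 ^ 2 * X 1 ^ 2, X 0 * X 1 ^ 3, X 0 * X 1 ^ 2 * X 2, X 0 * X 1 * X 2 ^ 2,
        X 1 ^ 4, X 1 ^ 3 * X 2, X 1 ^ 2 * X 2 ^ 2, X 1 * X 2 ^ 3, X 2 ^ 4} : Set MvP) ∧
    Module.finrank ℝ ↥(Submodule.span ℝ FT1) = 9 := by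
  have hspan : Submodule.span ℝ FT1 = restrictSupport ℝ quarticExpsXLeY :=
    le_antisymm (Submodule.span_le.mpr FT1_subset_restrictSupport_quarticExpsXLeY)
      restrictSupport_quarticExpsXLeY_le_span_FT1
  refine ⟨?_, ?_, ?_⟩
  · ext f
    rw [SetLike.mem_coe, hspan, mem_restrictSupport_quarticExpsXLeY_iff]
    refine and_congr_right fun hf => (forall_coeff_eq_zero_iff hf).trans ?_
    simp only [xyzExp, Finsupp.single_zero, add_zero]
  · rw [hspan, restrictSupport_eq_span, image_monomial_quarticExpsXLeY]
  · rw [hspan, Module.finrank_eq_nat_card_basis (basisRestrictSupport ℝ _), card_quarticExpsXLeY]
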